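/- arXiv:2106.03681 — 3 statements merged into one kernel-verified Lean document; each statement's English description precedes it below -/
import Mathlib

section
/- Let (E,F) be a self-similar ends space. Then for all maximal points x, y ∈ M(E) and all clopen neighborhoods U of x and V of y, there exists a homeomorphism of pairs φ from (U, U ∩ F) to (V, V ∩ F) such that φ(x) = y. -/
section EndsSpace

variable {E : Type*} [TopologicalSpace E]

/-- A homeomorphism of pairs from `(A, A ∩ F)` to `(B, B ∩ F)`:
a homeomorphism of the subspaces `A → B` carrying `A ∩ F` onto `B ∩ F`. -/
def PairHomeo (F A B : Set E) : Prop :=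
  ∃ h : A ≃ₜ B, ∀ x : A, ((h x : E) ∈ F ↔ (x : E) ∈ F)

/-- `(E, F)` is self-similar: every partition of `E` into finitely many pairwise
disjoint nonempty clopen sets has a piece containing a clopen set `D` with
`(D, D ∩ F)` homeomorphic (as a pair) to `(E, F)`. -/
def SelfSimilarPair (F : Set E) : Prop :=
  ∀ (n : ℕ) (P : Fin n → Set E),
    (∀ i, IsClopen (P i)) → (∀ i, (P i).Nonempty) →
    Pairwise (Function.onFun Disjoint P) → (⋃ i, P i) = Set.univ →
    ∃ i, ∃ D : Set E, IsClopen D ∧ D ⊆ P i ∧ PairHomeo F D Set.univ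

/-- The preorder `x ≼ y` on ends: every clopen neighborhood `U` of `y` contains a
clopen set `D` for which there are a clopen neighborhood `V` of `x` and a
homeomorphism of pairs `(V, V ∩ F) → (D, D ∩ F)`. -/
def EndsLE (F : Set E) (x y : E) : Prop :=
  ∀ U : Set E, IsClopen U → y ∈ U →
    ∃ D : Set E, D ⊆ U ∧ IsClopen D ∧
      ∃ V : Set E, IsClopen V ∧ x ∈ V ∧ PairHomeo F V D

/-- The equivalence `x ∼ y`: `x ≼ y` and `y ≼ x`. -/
def EndsEquiv (F : Set E) (x y : E) : Prop := EndsLE F x y ∧ EndsLE F y x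

/-- `x` is a maximal end. -/
def MaximalEnd (F : Set E) (x : E) : Prop := ∀ y, EndsLE F x y → EndsLE F y x

/-- `M(E)`, the set of maximal ends. -/
def MaxSet (F : Set E) : Set E := {x | MaximalEnd F x}

/-- `(E, F)` is uniformly self-similar: it is self-similar, `M(E)` is a single
`∼`-equivalence class, and `M(E)` is homeomorphic to the Cantor space `ℕ → Bool`. -/
def UniformlySelfSimilar (F : Set E) : Prop :=
  SelfSimilarPair F ∧
  (∃ x, MaxSet F = {y | EndsEquiv F x y}) ∧
  Nonempty (↥(MaxSet F) ≃ₜ (ℕ → Bool))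

/-- The group `Homeo(E,F)` of homeomorphisms of `E` preserving `F`,
as a subgroup of the permutation group of `E`. -/
def EndsHomeo (F : Set E) : Subgroup (Equiv.Perm E) where
  carrier := {h | Continuous h ∧ Continuous h.symm ∧ ∀ x, h x ∈ F ↔ x ∈ F}
  one_mem' := ⟨continuous_id, continuous_id, fun _ => Iff.rfl⟩
  mul_mem' := by
    rintro a b ⟨ha1, ha2, ha3⟩ ⟨hb1, hb2, hb3⟩
    refine ⟨?_, ?_, fun x => ?_⟩
    · exact ha1.comp hb1
    · exact hb2.comp ha2
    · exact (ha3 (b x)).trans (hb3 x)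
  inv_mem' := by
    rintro a ⟨ha1, ha2, ha3⟩
    refine ⟨ha2, ha1, fun x => ?_⟩
    have h := ha3 (a⁻¹ x)
    rw [show a (a⁻¹ x) = x from (Equiv.eq_symm_apply a).mp rfl] at h
    exact h.symm

/-- A half-space of `(E,F)`: a clopen set meeting `M(E)` in a nonempty proper subset. -/
def IsHalfSpace (F H : Set E) : Prop :=
  IsClopen H ∧ (H ∩ MaxSet F).Nonempty ∧ H ∩ MaxSet F ⊂ MaxSet F

/-- `φ` is an `H`-translation: the sets `φⁿ(H)`, `n ∈ ℤ`, are pairwise disjoint. -/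
def IsHTranslation (H : Set E) (φ : Equiv.Perm E) : Prop :=
  ∀ m n : ℤ, m ≠ n → Disjoint ((φ ^ m) '' H) ((φ ^ n) '' H)

/-- A homeomorphism is supported on `H` if it fixes every point outside `H`. -/
def SupportedOn (H : Set E) (h : Equiv.Perm E) : Prop := ∀ x ∉ H, h x = x

end EndsSpace

/-!
Every clopen neighbourhood of a maximal end contains a clopen copy of `(E, F)`: compactness and
self-similarity give one point with this property, and maximality transports it to every maximal
end. With such copies one shrinks clopen neighbourhoods of `x` and `y` to the points in lockstep,
each time absorbing a copy of the other side's removed ring, so that the successive rings are pair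
homeomorphic; gluing these ring maps with `x ↦ y` gives the homeomorphism `U ≃ₜ V`.
-/

open Set Filter Topology Function

section AmbientMaps

variable {E : Type*} [TopologicalSpace E] {F A B C S : Set E} {f g : E → E}

/-- `PairHomeo F A B` witnessed by a map `f : E → E` of the ambient space, which composes and
glues more easily than homeomorphisms of subspaces; see `PairHomeoOn.toHomeomorph`. -/
structure PairHomeoOn (F : Set E) (f : E → E) (A B : Set E) : Prop where
  continuousOn : ContinuousOn f A
  bijOn : BijOn f A B
  mem_iff : ∀ z ∈ A, f z ∈ F ↔ z ∈ F

namespace PairHomeoOn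

theorem comp (hf : PairHomeoOn F f A B) (hg : PairHomeoOn F g B C) :
    PairHomeoOn F (g ∘ f) A C :=
  ⟨hg.continuousOn.comp hf.continuousOn hf.bijOn.mapsTo, hg.bijOn.comp hf.bijOn,
    fun z hz => (hg.mem_iff _ (hf.bijOn.mapsTo hz)).trans (hf.mem_iff z hz)⟩

theorem congr (hf : PairHomeoOn F f A B) (h : EqOn f g A) : PairHomeoOn F g A B :=
  ⟨hf.continuousOn.congr h.symm, hf.bijOn.congr h, fun z hz => h hz ▸ hf.mem_iff z hz⟩

theorem image_of_subset (hf : PairHomeoOn F f A B) (hS : S ⊆ A) : PairHomeoOn F f S (f '' S) :=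
  ⟨hf.continuousOn.mono hS, (hf.bijOn.injOn.mono hS).bijOn_image, fun z hz => hf.mem_iff z (hS hz)⟩

theorem union {A₁ A₂ B₁ B₂ : Set E} {f₁ f₂ : E → E} (h₁ : PairHomeoOn F f₁ A₁ B₁)
    (h₂ : PairHomeoOn F f₂ A₂ B₂) (hA₁ : IsOpen A₁) (hA₂ : IsOpen A₂) (hA : Disjoint A₁ A₂)
    (hB : Disjoint B₁ B₂) : ∃ f, PairHomeoOn F f (A₁ ∪ A₂) (B₁ ∪ B₂) := by
  classical
  have h₁' : PairHomeoOn F (A₁.piecewise f₁ f₂) A₁ B₁ :=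
    h₁.congr fun z hz => (piecewise_eq_of_mem _ _ _ hz).symm
  have h₂' : PairHomeoOn F (A₁.piecewise f₁ f₂) A₂ B₂ :=
    h₂.congr fun z hz => (piecewise_eq_of_notMem _ _ _ (disjoint_right.1 hA hz)).symm
  refine ⟨A₁.piecewise f₁ f₂, h₁'.continuousOn.union_of_isOpen h₂'.continuousOn hA₁ hA₂,
    h₁'.bijOn.union h₂'.bijOn ?_, fun z hz => hz.elim (h₁'.mem_iff z) (h₂'.mem_iff z)⟩
  refine (injOn_union hA).2 ⟨h₁'.bijOn.injOn, h₂'.bijOn.injOn, fun z₁ hz₁ z₂ hz₂ he => ?_⟩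
  exact disjoint_left.1 hB (h₁'.bijOn.mapsTo hz₁) (he ▸ h₂'.bijOn.mapsTo hz₂)

variable [CompactSpace E] [T2Space E]

theorem isClopen_image (hf : PairHomeoOn F f A B) (hA : IsClosed A) (hB : IsOpen B)
    (hS : IsClopen S) (hSA : S ⊆ A) : IsClopen (f '' S) := by
  have hcompl : f '' (A \ S) = B \ f '' S := by
    rw [hf.bijOn.injOn.image_sdiff, hf.bijOn.image_eq, inter_eq_right.2 hSA]
  refine ⟨(hS.isClosed.isCompact.image_of_continuousOn (hf.continuousOn.mono hSA)).isClosed, ?_⟩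
  rw [← sdiff_sdiff_cancel_left (hf.bijOn.image_eq ▸ image_mono hSA : f '' S ⊆ B), ← hcompl]
  exact hB.sdiff ((hA.sdiff hS.isOpen).isCompact.image_of_continuousOn
    (hf.continuousOn.mono sdiff_subset)).isClosed

/-- A continuous bijection from a compact space to a Hausdorff one. -/
noncomputable def toHomeomorph (hf : PairHomeoOn F f A B) (hA : IsClosed A) : A ≃ₜ B :=
  haveI : CompactSpace A := isCompact_iff_compactSpace.1 hA.isCompact
  Continuous.homeoOfEquivCompactToT2 (f := hf.bijOn.equiv f)
    (hf.continuousOn.domRestrict.codRestrict fun z => hf.bijOn.mapsTo z.2)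

@[simp]
theorem coe_toHomeomorph_apply (hf : PairHomeoOn F f A B) (hA : IsClosed A) (z : A) :
    (hf.toHomeomorph hA z : E) = f z :=
  rfl

theorem mem_iff_toHomeomorph (hf : PairHomeoOn F f A B) (hA : IsClosed A) (z : A) :
    (hf.toHomeomorph hA z : E) ∈ F ↔ (z : E) ∈ F :=
  hf.mem_iff z z.2

theorem pairHomeo (hf : PairHomeoOn F f A B) (hA : IsClosed A) : PairHomeo F A B :=
  ⟨hf.toHomeomorph hA, hf.mem_iff_toHomeomorph hA⟩

end PairHomeoOn

theorem PairHomeo.symm (h : PairHomeo F A B) : PairHomeo F B A := by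
  obtain ⟨φ, hφ⟩ := h
  exact ⟨φ.symm, fun z => by simpa using (hφ (φ.symm z)).symm⟩

theorem PairHomeo.exists_pairHomeoOn (h : PairHomeo F A B) : ∃ f, PairHomeoOn F f A B := by
  classical
  obtain ⟨φ, hφ⟩ := h
  let f : E → E := fun z => if hz : z ∈ A then φ ⟨z, hz⟩ else z
  have hf : ∀ z : A, f z = φ z := fun z => dif_pos z.2
  refine ⟨f, ⟨?_, ⟨fun z hz => hf ⟨z, hz⟩ ▸ (φ ⟨z, hz⟩).2, ?_, ?_⟩, ?_⟩⟩
  · rw [continuousOn_iff_continuous_domRestrict]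
    exact (continuous_subtype_val.comp φ.continuous).congr fun z => (hf z).symm
  · intro z₁ hz₁ z₂ hz₂ he
    rw [hf ⟨z₁, hz₁⟩, hf ⟨z₂, hz₂⟩] at he
    exact congrArg Subtype.val (φ.injective (Subtype.ext he))
  · intro w hw
    exact ⟨φ.symm ⟨w, hw⟩, (φ.symm ⟨w, hw⟩).2, by rw [hf, Homeomorph.apply_symm_apply]⟩
  · exact fun z hz => hf ⟨z, hz⟩ ▸ hφ ⟨z, hz⟩

theorem PairHomeoOn.exists_symm [CompactSpace E] [T2Space E] (hf : PairHomeoOn F f A B)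
    (hA : IsClosed A) : ∃ g, PairHomeoOn F g B A :=
  (hf.pairHomeo hA).symm.exists_pairHomeoOn

end AmbientMaps

section Copies

variable {E : Type*} [TopologicalSpace E] {F U W : Set E} {x y : E}

def ContainsCopy (F U : Set E) : Prop :=
  ∃ D g, IsClopen D ∧ D ⊆ U ∧ PairHomeoOn F g univ D

theorem ContainsCopy.mono (h : ContainsCopy F U) (hUW : U ⊆ W) : ContainsCopy F W := by
  obtain ⟨D, g, hD, hDU, hg⟩ := h
  exact ⟨D, g, hD, hDU.trans hUW, hg⟩

theorem SelfSimilarPair.exists_containsCopy {ι : Type*} [Finite ι] (hss : SelfSimilarPair F)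
    {P : ι → Set E} (hP : ∀ i, IsClopen (P i)) (hdisj : Pairwise (Disjoint on P))
    (hcover : ⋃ i, P i = univ) : ∃ i, ContainsCopy F (P i) := by
  -- `SelfSimilarPair` only speaks about partitions into nonempty pieces
  let e := Finite.equivFin {i // (P i).Nonempty}
  have hcover' : ⋃ k, P (e.symm k) = univ := by
    refine eq_univ_of_forall fun z => ?_
    obtain ⟨i, hz⟩ := mem_iUnion.1 (hcover ▸ mem_univ z)
    exact mem_iUnion.2 ⟨e ⟨i, z, hz⟩, by simpa using hz⟩
  obtain ⟨k, D, hD, hDP, hDE⟩ := hss _ (fun k => P (e.symm k)) (fun k => hP _)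
    (fun k => (e.symm k).2) (fun k l hkl => hdisj fun h => hkl (e.symm.injective (Subtype.ext h)))
    hcover'
  obtain ⟨g, hg⟩ := hDE.symm.exists_pairHomeoOn
  exact ⟨_, D, g, hD, hDP, hg⟩

variable [CompactSpace E] [T2Space E]

theorem ContainsCopy.of_pairHomeoOn {A B : Set E} {f : E → E} (h : ContainsCopy F A)
    (hf : PairHomeoOn F f A B) (hA : IsClosed A) (hB : IsOpen B) : ContainsCopy F B := by
  obtain ⟨D, g, hD, hDA, hg⟩ := h
  exact ⟨f '' D, f ∘ g, hf.isClopen_image hA hB hD hDA,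
    hf.bijOn.image_eq ▸ image_mono hDA, hg.comp (hf.image_of_subset hDA)⟩

variable [TotallyDisconnectedSpace E]

/-- Otherwise finitely many clopen sets without copies cover `E`, and a clopen partition refining
them contradicts self-similarity. -/
theorem SelfSimilarPair.exists_forall_containsCopy (hss : SelfSimilarPair F) :
    ∃ z, ∀ W, IsClopen W → z ∈ W → ContainsCopy F W := by
  by_contra! h
  choose W hW hzW hWc using h
  obtain ⟨t, ht⟩ := isCompact_univ.elim_finite_subcover W (fun z => (hW z).isOpen)
    fun z _ => mem_iUnion.2 ⟨z, hzW z⟩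
  obtain ⟨C, hC, -, hCW, hcover, hdisj⟩ := exists_clopen_partition_of_clopen_cover
    (Z := fun _ : t => ∅) (D := fun z : t => W z) (fun _ => isClosed_empty) (fun z => hW z)
    (fun _ => empty_subset _) (by simp [PairwiseDisjoint, Set.Pairwise])
  have hCcover : ⋃ i, C i = univ := by
    refine eq_univ_of_univ_subset (ht.trans (hcover.trans' ?_))
    simpa only [iUnion_subtype] using subset_rfl
  obtain ⟨i, hi⟩ := hss.exists_containsCopy hC (pairwise_univ.1 hdisj) hCcover
  exact hWc i (hi.mono (hCW i))

theorem MaximalEnd.containsCopy (hss : SelfSimilarPair F) (hx : MaximalEnd F x)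
    (hU : IsClopen U) (hxU : x ∈ U) : ContainsCopy F U := by
  obtain ⟨z, hz⟩ := hss.exists_forall_containsCopy
  have hxz : EndsLE F x z := by
    intro W hW hzW
    obtain ⟨D, g, hD, hDW, hg⟩ := hz W hW hzW
    exact ⟨D, hDW, hD, univ, isClopen_univ, mem_univ x, hg.pairHomeo isClosed_univ⟩
  obtain ⟨D, hDU, hD, V, hV, hzV, hVD⟩ := hx z hxz U hU hxU
  obtain ⟨f, hf⟩ := hVD.exists_pairHomeoOn
  exact ((hz V hV hzV).of_pairHomeoOn hf hV.isClosed hD.isOpen).mono hDU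

theorem MaximalEnd.mem (hss : SelfSimilarPair F) (hF : IsClosed F) (hFne : F.Nonempty)
    (hx : MaximalEnd F x) : x ∈ F := by
  rw [← hF.closure_eq, mem_closure_iff_nhds_basis (nhds_basis_clopen x)]
  rintro W ⟨hxW, hW⟩
  obtain ⟨D, g, -, hDW, hg⟩ := hx.containsCopy hss hW hxW
  obtain ⟨p, hp⟩ := hFne
  exact ⟨g p, (hg.mem_iff p (mem_univ p)).2 hp, hDW (hg.bijOn.mapsTo (mem_univ p))⟩

theorem MaximalEnd.mem_iff (hss : SelfSimilarPair F) (hF : IsClosed F)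
    (hx : MaximalEnd F x) (hy : MaximalEnd F y) : x ∈ F ↔ y ∈ F := by
  rcases F.eq_empty_or_nonempty with rfl | hFne
  · simp
  · exact iff_of_true (hx.mem hss hF hFne) (hy.mem hss hF hFne)

end Copies

section Shrinking

variable {E : Type*} [TopologicalSpace E] [CompactSpace E] [T2Space E] {F A B D S : Set E}
  {g : E → E} {x y : E}

/-- Since `S` misses `D ⊇ g(S)`, the copies `g(S)` and `g(g(S))` of `S` are disjoint, so one of
them avoids `p`. -/
theorem PairHomeoOn.exists_clopen_copy_notMem (hg : PairHomeoOn F g univ D) (hD : IsOpen D)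
    (hS : IsClopen S) (hSD : Disjoint S D) (p : E) :
    ∃ T, IsClopen T ∧ T ⊆ D ∧ p ∉ T ∧ ∃ f, PairHomeoOn F f S T := by
  have himage : ∀ T, g '' T ⊆ D := fun T => hg.bijOn.image_eq ▸ image_mono (subset_univ T)
  have hS₁ : IsClopen (g '' S) := hg.isClopen_image isClosed_univ hD hS (subset_univ S)
  have hdisj : Disjoint (g '' S) (g '' (g '' S)) :=
    (hSD.mono_right (himage S)).image hg.bijOn.injOn (subset_univ _) (subset_univ _)
  have hcopy₁ : PairHomeoOn F g S (g '' S) := hg.image_of_subset (subset_univ S)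
  by_cases hp : p ∈ g '' S
  · exact ⟨g '' (g '' S), hg.isClopen_image isClosed_univ hD hS₁ (subset_univ _), himage _,
      disjoint_left.1 hdisj hp, g ∘ g, hcopy₁.comp (hg.image_of_subset (subset_univ _))⟩
  · exact ⟨g '' S, hS₁, himage S, hp, g, hcopy₁⟩

variable [TotallyDisconnectedSpace E]

/-- `A' = N \ T` and `B' = M \ T'` for copies `T ⊆ N` of `B \ M` and `T' ⊆ M` of `A \ N`; then
`A \ A' = (A \ N) ∪ T` is sent onto `T' ∪ (B \ M) = B \ B'`. -/
theorem exists_clopen_pairHomeoOn_diff (hss : SelfSimilarPair F) (hx : MaximalEnd F x)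
    (hy : MaximalEnd F y) (hA : IsClopen A) (hB : IsClopen B) {N M : Set E} (hN : IsClopen N)
    (hM : IsClopen M) (hNA : N ⊆ A) (hMB : M ⊆ B) (hxN : x ∈ N) (hyM : y ∈ M)
    (hBN : Disjoint (B \ M) N) (hAM : Disjoint (A \ N) M) :
    ∃ A' B', IsClopen A' ∧ IsClopen B' ∧ x ∈ A' ∧ y ∈ B' ∧ A' ⊆ N ∧ B' ⊆ M ∧
      ∃ f, PairHomeoOn F f (A \ A') (B \ B') := by
  obtain ⟨D, g, hD, hDN, hg⟩ := hx.containsCopy hss hN hxN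
  obtain ⟨D', g', hD', hD'M, hg'⟩ := hy.containsCopy hss hM hyM
  obtain ⟨T, hT, hTD, hxT, f, hf⟩ :=
    hg.exists_clopen_copy_notMem hD.isOpen (hB.diff hM) (hBN.mono_right hDN) x
  obtain ⟨T', hT', hT'D', hyT', f', hf'⟩ :=
    hg'.exists_clopen_copy_notMem hD'.isOpen (hA.diff hN) (hAM.mono_right hD'M) y
  obtain ⟨f'', hf''⟩ := hf.exists_symm (hB.diff hM).isClosed
  have hTN : T ⊆ N := hTD.trans hDN
  have hT'M : T' ⊆ M := hT'D'.trans hD'M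
  refine ⟨N \ T, M \ T', hN.diff hT, hM.diff hT', ⟨hxN, hxT⟩, ⟨hyM, hyT'⟩, sdiff_subset,
    sdiff_subset, ?_⟩
  rw [sdiff_sdiff_right, sdiff_sdiff_right, inter_eq_right.2 (hTN.trans hNA),
    inter_eq_right.2 (hT'M.trans hMB), union_comm (B \ M)]
  exact hf'.union hf'' (hA.diff hN).isOpen hT.isOpen
    (disjoint_sdiff_left.mono_right hTN) (disjoint_sdiff_left.mono_right hT'M).symm

theorem exists_clopen_pairHomeoOn_diff_of_eq_or_disjoint (hss : SelfSimilarPair F)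
    (hx : MaximalEnd F x) (hy : MaximalEnd F y) (hxy : x = y ∨ Disjoint A B)
    (hA : IsClopen A) (hB : IsClopen B) (hxA : x ∈ A) (hyB : y ∈ B) {C C' : Set E}
    (hC : IsClopen C) (hC' : IsClopen C') (hxC : x ∈ C) (hyC' : y ∈ C') :
    ∃ A' B', IsClopen A' ∧ IsClopen B' ∧ x ∈ A' ∧ y ∈ B' ∧ A' ⊆ A ∩ C ∧ B' ⊆ B ∩ C' ∧
      ∃ f, PairHomeoOn F f (A \ A') (B \ B') := by
  rcases hxy with rfl | hAB
  · have hN : IsClopen (A ∩ B ∩ (C ∩ C')) := (hA.inter hB).inter (hC.inter hC')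
    obtain ⟨A', B', hA', hB', hxA', hxB', hA'N, hB'N, hf⟩ := exists_clopen_pairHomeoOn_diff hss hx
      hy hA hB hN hN (fun z hz => hz.1.1) (fun z hz => hz.1.2) ⟨⟨hxA, hyB⟩, hxC, hyC'⟩
      ⟨⟨hxA, hyB⟩, hxC, hyC'⟩ disjoint_sdiff_left disjoint_sdiff_left
    exact ⟨A', B', hA', hB', hxA', hxB', fun z hz => ⟨(hA'N hz).1.1, (hA'N hz).2.1⟩,
      fun z hz => ⟨(hB'N hz).1.2, (hB'N hz).2.2⟩, hf⟩
  · exact exists_clopen_pairHomeoOn_diff hss hx hy hA hB (hA.inter hC) (hB.inter hC')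
      inter_subset_left inter_subset_left ⟨hxA, hxC⟩ ⟨hyB, hyC'⟩
      (hAB.symm.mono sdiff_subset inter_subset_left) (hAB.mono sdiff_subset inter_subset_left)

end Shrinking

section Rings

variable {α β : Type*}

theorem exists_mem_diff_succ_of_notMem {A : ℕ → Set α} {z : α} {m k : ℕ} (hmk : m ≤ k)
    (hm : z ∈ A m) (hk : z ∉ A k) : ∃ n, m ≤ n ∧ z ∈ A n \ A (n + 1) := by
  induction k, hmk using Nat.le_induction with
  | base => exact absurd hm hk
  | succ k hmk ih =>
    by_cases hz : z ∈ A k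
    · exact ⟨k, hmk, hz, hk⟩
    · exact ih hz

theorem Antitone.pairwise_disjoint_diff_succ {A : ℕ → Set α} (hA : Antitone A) :
    Pairwise (Disjoint on fun n => A n \ A (n + 1)) :=
  (pairwise_disjoint_on _).2 fun _ _ hmn =>
    disjoint_left.2 fun _ hm hn => hm.2 (hA (Nat.succ_le_of_lt hmn) hn.1)

theorem exists_eqOn_of_pairwise_disjoint {ι : Type*} {S : ι → Set α}
    (hS : Pairwise (Disjoint on S)) (f : ι → α → β) {x : α} (hx : ∀ i, x ∉ S i) (y : β) :
    ∃ g : α → β, g x = y ∧ ∀ i, EqOn g (f i) (S i) := by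
  classical
  refine ⟨fun z => if h : ∃ i, z ∈ S i then f h.choose z else y, by simp [hx], fun i z hz => ?_⟩
  have h : ∃ i, z ∈ S i := ⟨i, hz⟩
  have hi : h.choose = i := hS.eq (not_disjoint_iff.2 ⟨z, h.choose_spec, hz⟩)
  simp only [dif_pos h, hi]

theorem BijOn.iUnion_of_pairwise_disjoint {ι : Type*} {s : ι → Set α} {t : ι → Set β}
    {f : α → β} (h : ∀ i, BijOn f (s i) (t i)) (ht : Pairwise (Disjoint on t)) :
    BijOn f (⋃ i, s i) (⋃ i, t i) := by
  refine bijOn_iUnion h fun z₁ hz₁ z₂ hz₂ he => ?_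
  obtain ⟨i, hi⟩ := mem_iUnion.1 hz₁
  obtain ⟨j, hj⟩ := mem_iUnion.1 hz₂
  obtain rfl : i = j :=
    ht.eq (not_disjoint_iff.2 ⟨f z₁, (h i).mapsTo hi, he ▸ (h j).mapsTo hj⟩)
  exact (h i).injOn hi hj he

variable [TopologicalSpace α] [T1Space α] {A : ℕ → Set α} {x : α}

theorem Filter.HasAntitoneBasis.exists_mem_diff_succ (hA : (𝓝 x).HasAntitoneBasis A) {m : ℕ}
    {z : α} (hz : z ∈ A m) (hzx : z ≠ x) : ∃ n, m ≤ n ∧ z ∈ A n \ A (n + 1) := by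
  obtain ⟨k, -, hk⟩ := hA.toHasBasis.mem_iff.1 (isOpen_compl_singleton.mem_nhds hzx.symm)
  exact exists_mem_diff_succ_of_notMem (le_max_left m k) hz
    fun h => hk (hA.antitone (le_max_right m k) h) rfl

theorem Filter.HasAntitoneBasis.insert_iUnion_diff_succ (hA : (𝓝 x).HasAntitoneBasis A) :
    insert x (⋃ n, A n \ A (n + 1)) = A 0 := by
  refine subset_antisymm (insert_subset (mem_of_mem_nhds (hA.mem 0))
    (iUnion_subset fun n => sdiff_subset.trans (hA.antitone n.zero_le))) fun z hz => ?_
  rcases eq_or_ne z x with rfl | hzx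
  · exact mem_insert z _
  · obtain ⟨n, -, hn⟩ := hA.exists_mem_diff_succ hz hzx
    exact mem_insert_of_mem x (mem_iUnion.2 ⟨n, hn⟩)

end Rings

section Gluing

variable {E : Type*} [TopologicalSpace E] [T1Space E] {F : Set E} {A B : ℕ → Set E}
  {g : E → E} {x y : E}

theorem Filter.HasAntitoneBasis.mapsTo_of_pairHomeoOn_diff_succ
    (hA : (𝓝 x).HasAntitoneBasis A) (hB : (𝓝 y).HasAntitoneBasis B) (hgx : g x = y)
    (hg : ∀ n, PairHomeoOn F g (A n \ A (n + 1)) (B n \ B (n + 1))) (m : ℕ) :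
    MapsTo g (A m) (B m) := by
  intro z hz
  rcases eq_or_ne z x with rfl | hzx
  · exact hgx ▸ mem_of_mem_nhds (hB.mem m)
  · obtain ⟨n, hmn, hn⟩ := hA.exists_mem_diff_succ hz hzx
    exact hB.antitone hmn ((hg n).bijOn.mapsTo hn).1

theorem Filter.HasAntitoneBasis.pairHomeoOn_of_diff_succ (hA : (𝓝 x).HasAntitoneBasis A)
    (hB : (𝓝 y).HasAntitoneBasis B) (hAc : ∀ n, IsClopen (A n)) (hgx : g x = y)
    (hxy : x ∈ F ↔ y ∈ F) (hg : ∀ n, PairHomeoOn F g (A n \ A (n + 1)) (B n \ B (n + 1))) :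
    PairHomeoOn F g (A 0) (B 0) := by
  have hmaps := hA.mapsTo_of_pairHomeoOn_diff_succ hB hgx hg
  refine ⟨fun z hz => ?_, ?_, fun z hz => ?_⟩
  · rcases eq_or_ne z x with rfl | hzx
    · refine ContinuousAt.continuousWithinAt ?_
      rw [ContinuousAt, hgx, hA.tendsto_iff hB.toHasBasis]
      exact fun m _ => ⟨m, trivial, hmaps m⟩
    · obtain ⟨n, -, hn⟩ := hA.exists_mem_diff_succ hz hzx
      exact ((hg n).continuousOn.continuousAt
        (((hAc n).isOpen.sdiff (hAc (n + 1)).isClosed).mem_nhds hn)).continuousWithinAt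
  · rw [← hA.insert_iUnion_diff_succ, ← hB.insert_iUnion_diff_succ, ← hgx]
    refine (BijOn.iUnion_of_pairwise_disjoint (fun n => (hg n).bijOn)
      hB.antitone.pairwise_disjoint_diff_succ).insert ?_
    simpa [hgx] using fun n _ => mem_of_mem_nhds (hB.mem (n + 1))
  · rcases eq_or_ne z x with rfl | hzx
    · rwa [hgx, iff_comm]
    · obtain ⟨n, -, hn⟩ := hA.exists_mem_diff_succ hz hzx
      exact (hg n).mem_iff z hn

end Gluing

theorem exists_seq_of_forall_exists {α : Type*} {P : α → Prop} {R : ℕ → α → α → Prop} {a : α}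
    (ha : P a) (h : ∀ n b, P b → ∃ c, P c ∧ R n b c) :
    ∃ s : ℕ → α, s 0 = a ∧ ∀ n, P (s n) ∧ R n (s n) (s (n + 1)) := by
  choose! next hnextP hnextR using h
  let s : ℕ → α := fun n => Nat.rec a (fun n b => next n b) n
  have hs : ∀ n, P (s n) := fun n => by
    induction n with
    | zero => exact ha
    | succ n ih => exact hnextP n _ ih
  exact ⟨s, rfl, fun n => ⟨hs n, hnextR n _ (hs n)⟩⟩

theorem Filter.HasBasis.hasAntitoneBasis_of_subset {α : Type*} {l : Filter α} {A C : ℕ → Set α}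
    (hC : l.HasBasis (fun _ => True) C) (hA : ∀ n, A n ∈ l) (hAC : ∀ n, A (n + 1) ⊆ A n ∩ C n) :
    l.HasAntitoneBasis A :=
  ⟨hC.to_hasBasis' (fun n _ => ⟨n + 1, trivial, (hAC n).trans inter_subset_right⟩)
    fun n _ => hA n, antitone_nat_of_succ_le fun n => (hAC n).trans inter_subset_left⟩

section Maximal

variable {E : Type*} [TopologicalSpace E] [CompactSpace E] [T2Space E]
  [TotallyDisconnectedSpace E] [FirstCountableTopology E] {F U V : Set E} {x y : E}

/-- Shrink `U ⊇ A₁ ⊇ A₂ ⊇ ⋯` to `x` and `V ⊇ B₁ ⊇ B₂ ⊇ ⋯` to `y` with pair homeomorphic rings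
`Aₙ \ Aₙ₊₁ ≅ Bₙ \ Bₙ₊₁`, then glue the ring maps. -/
theorem exists_pairHomeoOn_of_eq_or_disjoint (hss : SelfSimilarPair F) (hx : MaximalEnd F x)
    (hy : MaximalEnd F y) (hxyF : x ∈ F ↔ y ∈ F) (hUV : x = y ∨ Disjoint U V)
    (hU : IsClopen U) (hxU : x ∈ U) (hV : IsClopen V) (hyV : y ∈ V) :
    ∃ f, PairHomeoOn F f U V ∧ f x = y := by
  obtain ⟨Cx, hCx, hCxB⟩ := (nhds_basis_clopen x).exists_antitone_subbasis
  obtain ⟨Cy, hCy, hCyB⟩ := (nhds_basis_clopen y).exists_antitone_subbasis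
  let P : Set E × Set E → Prop := fun p =>
    IsClopen p.1 ∧ IsClopen p.2 ∧ x ∈ p.1 ∧ y ∈ p.2 ∧ (x = y ∨ Disjoint p.1 p.2)
  let R : ℕ → Set E × Set E → Set E × Set E → Prop := fun n p q =>
    q.1 ⊆ p.1 ∩ Cx n ∧ q.2 ⊆ p.2 ∩ Cy n ∧ ∃ f, PairHomeoOn F f (p.1 \ q.1) (p.2 \ q.2)
  obtain ⟨s, hs0, hs⟩ := exists_seq_of_forall_exists (P := P) (R := R) (a := (U, V))
    ⟨hU, hV, hxU, hyV, hUV⟩ fun n p ⟨hA, hB, hxA, hyB, hAB⟩ => by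
      obtain ⟨A', B', hA', hB', hxA', hyB', hA'A, hB'B, hf⟩ :=
        exists_clopen_pairHomeoOn_diff_of_eq_or_disjoint hss hx hy hAB hA hB hxA hyB
          (hCx n).2 (hCy n).2 (hCx n).1 (hCy n).1
      exact ⟨(A', B'), ⟨hA', hB', hxA', hyB',
        hAB.imp_right fun h => h.mono (hA'A.trans inter_subset_left)
          (hB'B.trans inter_subset_left)⟩, hA'A, hB'B, hf⟩
  choose f hf using fun n => (hs n).2.2.2
  have hA : (𝓝 x).HasAntitoneBasis fun n => (s n).1 := by
    refine hCxB.toHasBasis.hasAntitoneBasis_of_subset (fun n => ?_) fun n => (hs n).2.1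
    obtain ⟨⟨hA, -, hxA, -⟩, -⟩ := hs n
    exact hA.isOpen.mem_nhds hxA
  have hB : (𝓝 y).HasAntitoneBasis fun n => (s n).2 := by
    refine hCyB.toHasBasis.hasAntitoneBasis_of_subset (fun n => ?_) fun n => (hs n).2.2.1
    obtain ⟨⟨-, hB, -, hyB, -⟩, -⟩ := hs n
    exact hB.isOpen.mem_nhds hyB
  obtain ⟨g, hgx, hgf⟩ := exists_eqOn_of_pairwise_disjoint hA.antitone.pairwise_disjoint_diff_succ
    f (fun n hn => hn.2 (mem_of_mem_nhds (hA.mem (n + 1)))) y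
  refine ⟨g, ?_, hgx⟩
  simpa only [hs0] using hA.pairHomeoOn_of_diff_succ hB (fun n => (hs n).1.1) hgx hxyF
    fun n => (hf n).congr (hgf n).symm

theorem MaximalEnd.exists_pairHomeoOn (hss : SelfSimilarPair F) (hF : IsClosed F)
    (hx : MaximalEnd F x) (hy : MaximalEnd F y) (hU : IsClopen U) (hxU : x ∈ U)
    (hV : IsClopen V) (hyV : y ∈ V) : ∃ f, PairHomeoOn F f U V ∧ f x = y := by
  rcases eq_or_ne x y with rfl | hxy
  · exact exists_pairHomeoOn_of_eq_or_disjoint hss hx hx Iff.rfl (Or.inl rfl) hU hxU hV hyV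
  -- `U → W → Wᶜ → V` for a clopen `W` separating `x` from `y`
  obtain ⟨W, hW, hxW, hyW⟩ := exists_isClopen_of_totally_separated hxy
  obtain ⟨f₁, hf₁, hf₁x⟩ :=
    exists_pairHomeoOn_of_eq_or_disjoint hss hx hx Iff.rfl (Or.inl rfl) hU hxU hW hxW
  obtain ⟨f₂, hf₂, hf₂x⟩ := exists_pairHomeoOn_of_eq_or_disjoint hss hx hy
    (hx.mem_iff hss hF hy) (Or.inr disjoint_compl_right) hW hxW hW.compl hyW
  obtain ⟨f₃, hf₃, hf₃y⟩ :=
    exists_pairHomeoOn_of_eq_or_disjoint hss hy hy Iff.rfl (Or.inl rfl) hW.compl hyW hV hyV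
  exact ⟨f₃ ∘ f₂ ∘ f₁, (hf₁.comp hf₂).comp hf₃, by simp [hf₁x, hf₂x, hf₃y]⟩

end Maximal

variable {E : Type*} [TopologicalSpace E] [Nonempty E] [CompactSpace E]
  [TopologicalSpace.MetrizableSpace E] [TotallyDisconnectedSpace E]

set_option linter.unusedSectionVars false in
theorem maximal_ends_clopen_nbhds_pair_homeo
    (F : Set E) (hF : IsClosed F) (hss : SelfSimilarPair F)
    (x y : E) (hx : MaximalEnd F x) (hy : MaximalEnd F y)
    (U V : Set E) (hU : IsClopen U) (hxU : x ∈ U) (hV : IsClopen V) (hyV : y ∈ V) :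
    ∃ φ : U ≃ₜ V, (∀ z : U, ((φ z : E) ∈ F ↔ (z : E) ∈ F)) ∧ (φ ⟨x, hxU⟩ : E) = y := by
  obtain ⟨f, hf, hfx⟩ := hx.exists_pairHomeoOn hss hF hy hU hxU hV hyV
  exact ⟨hf.toHomeomorph hU.isClosed, hf.mem_iff_toHomeomorph hU.isClosed,
    (hf.coe_toHomeomorph_apply hU.isClosed _).trans hfx⟩
end

section
/- Let α be a countably infinite set. Then the symmetric group of all permutations of α is generated by the set of involutions σ (i.e., σ² = 1 and σ ≠ 1) whose support {x ∈ α : σ(x) ≠ x} is infinite and whose fixed-point set {x ∈ α : σ(x) = x} is infinite. -/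
/-!
Every permutation `π` is a product of two involutions: choosing a base point `r` in each
`π`-cycle, the map `π ^ k r ↦ π ^ (-k) r` is an involution `f` with `f π f = π⁻¹`, and
`π = f * (f * π)`. An involution `τ` of an infinite set permutes the finite sets `{x, τ x}`,
so `α` splits into two infinite `τ`-invariant halves and `τ` is the product of its two
restrictions, each fixing infinitely many points. Finally an involution `σ` with infinitely
many fixed points is `(σ * ρ) * ρ`, where `ρ` is an involution supported on the fixed points of
`σ` that moves infinitely many and fixes infinitely many of them.
-/

open Equiv Function Set

namespace Set

variable {α β : Type*}

theorem Infinite.exists_subset_infinite_sdiff {s : Set α} (hs : s.Infinite) :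
    ∃ t ⊆ s, t.Infinite ∧ (s \ t).Infinite := by
  let e := Infinite.natEmbedding s hs
  let f : ℕ → α := fun n => e n
  have hf : Injective f := Subtype.val_injective.comp e.injective
  refine ⟨range fun n => f (2 * n), ?_, ?_, ?_⟩
  · rintro _ ⟨n, rfl⟩
    exact (e _).2
  · exact infinite_range_of_injective (hf.comp fun m n h => by omega)
  · refine (infinite_range_of_injective (f := fun n => f (2 * n + 1))
      (hf.comp fun m n h => by omega)).mono ?_
    rintro _ ⟨n, rfl⟩
    exact ⟨(e _).2, fun ⟨m, hm⟩ => by have := hf hm; omega⟩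

theorem exists_infinite_preimage_infinite_compl [Infinite α] {f : α → β}
    (hf : ∀ b, (f ⁻¹' {b}).Finite) : ∃ t : Set β, (f ⁻¹' t).Infinite ∧ (f ⁻¹' t)ᶜ.Infinite := by
  have hrange : (range f).Infinite := fun h =>
    infinite_univ (by simpa using h.preimage' fun b _ => hf b)
  obtain ⟨t, hts, ht, hrange_diff⟩ := hrange.exists_subset_infinite_sdiff
  refine ⟨t, Infinite.of_image f ?_, Infinite.of_image f ?_⟩
  · rwa [image_preimage_eq_of_subset hts]
  · rwa [← preimage_compl, image_preimage_eq_range_inter, ← sdiff_eq]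

end Set

namespace Equiv.Perm

variable {α : Type*}

def IsInfiniteCoinfiniteInvolution (σ : Perm α) : Prop :=
  σ ^ 2 = 1 ∧ σ ≠ 1 ∧ {x | σ x ≠ x}.Infinite ∧ {x | σ x = x}.Infinite

theorem IsInfiniteCoinfiniteInvolution.of_infinite {σ : Perm α} (hσ : σ ^ 2 = 1)
    (hsupp : {x | σ x ≠ x}.Infinite) (hfix : {x | σ x = x}.Infinite) :
    σ.IsInfiniteCoinfiniteInvolution := by
  refine ⟨hσ, ?_, hsupp, hfix⟩
  rintro rfl
  simp at hsupp

theorem zpow_neg_apply_eq_of_zpow_apply_eq {π : Perm α} {x : α} {a b : ℤ}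
    (h : (π ^ a) x = (π ^ b) x) : (π ^ (-a)) x = (π ^ (-b)) x :=
  calc (π ^ (-a)) x = (π ^ (-a) * π ^ (-b)) ((π ^ b) x) := by
        rw [mul_apply, ← mul_apply (π ^ (-b)), ← zpow_add, neg_add_cancel, zpow_zero, one_apply]
    _ = (π ^ (-b)) x := by
        rw [← h, ← mul_apply, ← zpow_add, ← zpow_add, show -a + -b + a = -b by abel]

theorem exists_sq_eq_one_mul_mul_eq_inv (π : Perm α) :
    ∃ f : Perm α, f ^ 2 = 1 ∧ f * π * f = π⁻¹ := by
  let r : α → α := fun x => (⟦x⟧ : Quotient (SameCycle.setoid π)).out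
  have hr_eq : ∀ {x y}, π.SameCycle x y → r x = r y := fun h =>
    congrArg Quotient.out (Quotient.sound h)
  have hr : ∀ x, π.SameCycle (r x) x := fun x => Quotient.mk_out (s := SameCycle.setoid π) x
  choose k hk using hr
  let g : α → α := fun x => (π ^ (-k x)) (r x)
  have hg : ∀ x (n : ℤ), (π ^ n) (r x) = x → g x = (π ^ (-n)) (r x) := fun x n h =>
    zpow_neg_apply_eq_of_zpow_apply_eq ((hk x).trans h.symm)
  have hrg : ∀ x, r (g x) = r x := fun x =>
    hr_eq ((sameCycle_zpow_left.2 (SameCycle.refl _ _)).trans ⟨k x, hk x⟩)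
  have hg_invol : Involutive g := fun x => by
    rw [hg (g x) (-k x) (by rw [hrg]), neg_neg, hrg, hk]
  have hg_comm : ∀ x, g (π x) = π⁻¹ (g x) := fun x => by
    have hrπ : r (π x) = r x := hr_eq ⟨-1, by simp⟩
    rw [hg (π x) (1 + k x) (by rw [hrπ, zpow_add, zpow_one, mul_apply, hk]), hrπ, neg_add,
      zpow_add, zpow_neg_one, mul_apply]
  refine ⟨hg_invol.toPerm, ?_, ?_⟩
  · ext x
    simp [sq, hg_invol x]
  · ext x
    simp [hg_comm, hg_invol x]

theorem exists_sq_eq_one_mul_eq (π : Perm α) :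
    ∃ ρ σ : Perm α, ρ ^ 2 = 1 ∧ σ ^ 2 = 1 ∧ ρ * σ = π := by
  obtain ⟨f, hf, hfπf⟩ := exists_sq_eq_one_mul_mul_eq_inv π
  refine ⟨f, f * π, hf, ?_, ?_⟩
  · rw [sq, ← mul_assoc, hfπf, inv_mul_cancel]
  · rw [← mul_assoc, ← sq, hf, one_mul]

theorem ofSubtype_subtypePerm_mul_ofSubtype_subtypePerm_compl {X : Set α}
    [DecidablePred (· ∈ X)] (τ : Perm α) (h : ∀ x, τ x ∈ X ↔ x ∈ X) :
    ofSubtype (τ.subtypePerm h) *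
      ofSubtype (τ.subtypePerm (p := (· ∈ Xᶜ)) fun x => not_congr (h x)) = τ := by
  ext x
  rw [mul_apply]
  by_cases hx : x ∈ X
  · rw [ofSubtype_subtypePerm_of_not_mem (p := (· ∈ Xᶜ)) _ (not_not.2 hx),
      ofSubtype_subtypePerm_of_mem _ hx]
  · rw [ofSubtype_subtypePerm_of_mem (p := (· ∈ Xᶜ)) _ hx,
      ofSubtype_subtypePerm_of_not_mem _ fun h' => hx ((h x).1 h')]

theorem ofSubtype_subtypePerm_sq_eq_one {p : α → Prop} [DecidablePred p] {τ : Perm α}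
    (hτ : τ ^ 2 = 1) (h : ∀ x, p (τ x) ↔ p x) : ofSubtype (τ.subtypePerm h) ^ 2 = 1 := by
  rw [← map_pow, subtypePerm_pow]
  simp only [hτ]
  rw [subtypePerm_one, map_one]

theorem exists_sq_eq_one_mul_eq_of_infinite [Infinite α] {τ : Perm α} (hτ : τ ^ 2 = 1) :
    ∃ σ₁ σ₂ : Perm α, σ₁ ^ 2 = 1 ∧ σ₂ ^ 2 = 1 ∧
      {x | σ₁ x = x}.Infinite ∧ {x | σ₂ x = x}.Infinite ∧ σ₁ * σ₂ = τ := by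
  classical
  have hττ : ∀ x, τ (τ x) = x := fun x => by rw [← mul_apply, ← sq, hτ, one_apply]
  let q : α → Sym2 α := fun x => s(x, τ x)
  have hq_fibers : ∀ c, (q ⁻¹' {c}).Finite := fun c => by
    induction c using Sym2.ind with
    | h a b =>
      refine (toFinite {a, b}).subset fun y hy => ?_
      have hy' : y ∈ s(a, b) := (show q y = s(a, b) from hy) ▸ Sym2.mem_mk_left y (τ y)
      simpa [Sym2.mem_iff] using hy'
  obtain ⟨t, ht, htc⟩ := exists_infinite_preimage_infinite_compl hq_fibers
  have hX : ∀ x, τ x ∈ q ⁻¹' t ↔ x ∈ q ⁻¹' t := fun x => by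
    simp only [mem_preimage, q, hττ, Sym2.eq_swap]
  refine ⟨_, _, ofSubtype_subtypePerm_sq_eq_one hτ hX, ofSubtype_subtypePerm_sq_eq_one hτ _,
    htc.mono fun x hx => ofSubtype_subtypePerm_of_not_mem _ hx,
    ht.mono fun x hx => ofSubtype_subtypePerm_of_not_mem _ (not_not.2 hx),
    ofSubtype_subtypePerm_mul_ofSubtype_subtypePerm_compl τ hX⟩

theorem exists_sq_eq_one_infinite_support_subset {s : Set α} (hs : s.Infinite) :
    ∃ ρ : Perm α, ρ ^ 2 = 1 ∧ (∀ x ∉ s, ρ x = x) ∧ {x | ρ x ≠ x}.Infinite ∧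
      (s ∩ {x | ρ x = x}).Infinite := by
  classical
  let μ : Perm ((ℕ ⊕ ℕ) ⊕ ℕ) := sumCongr (sumComm ℕ ℕ) (Equiv.refl ℕ)
  let ι : (ℕ ⊕ ℕ) ⊕ ℕ ↪ α :=
    ((Denumerable.eqv _).toEmbedding.trans (Set.Infinite.natEmbedding s hs)).trans
      (Embedding.subtype _)
  have hιs : ∀ b, ι b ∈ s := fun b => Subtype.prop _
  let ρ : Perm α := μ.extendDomain (Equiv.ofInjective ι ι.injective)
  have hρι : ∀ b, ρ (ι b) = ι (μ b) := fun b =>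
    extendDomain_apply_image μ (Equiv.ofInjective ι ι.injective) b
  refine ⟨ρ, ?_, fun x hx => extendDomain_apply_not_subtype _ _ ?_, ?_, ?_⟩
  · rw [← extendDomain_pow, show μ ^ 2 = 1 by ext (_ | _) <;> simp [μ, sq], extendDomain_one]
  · rintro ⟨b, rfl⟩
    exact hx (hιs b)
  · refine (infinite_range_of_injective (ι.injective.comp Sum.inl_injective)).mono ?_
    rintro _ ⟨b, rfl⟩
    rcases b with b | b <;> simp [hρι, μ]
  · refine (infinite_range_of_injective (ι.injective.comp Sum.inr_injective)).mono ?_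
    rintro _ ⟨b, rfl⟩
    exact ⟨hιs _, by simp [hρι, μ]⟩

theorem mem_closure_of_sq_eq_one_of_infinite_fixedPoints {σ : Perm α} (hσ : σ ^ 2 = 1)
    (hfix : {x | σ x = x}.Infinite) :
    σ ∈ Subgroup.closure {τ : Perm α | τ.IsInfiniteCoinfiniteInvolution} := by
  obtain ⟨ρ, hρ, hρ_fix, hρ_supp, hρ_fix'⟩ := exists_sq_eq_one_infinite_support_subset hfix
  have hdisj : Disjoint σ ρ := fun x => (em (σ x = x)).imp_right (hρ_fix x)
  have hρ_mem : ρ.IsInfiniteCoinfiniteInvolution :=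
    .of_infinite hρ hρ_supp (hρ_fix'.mono inter_subset_right)
  have hσρ_mem : (σ * ρ).IsInfiniteCoinfiniteInvolution := by
    refine .of_infinite ?_
      (hρ_supp.mono fun x (hx : ρ x ≠ x) h => hx (hdisj.mul_apply_eq_iff.1 h).2)
      (hρ_fix'.mono fun x hx => hdisj.mul_apply_eq_iff.2 hx)
    rw [hdisj.commute.mul_pow, hσ, hρ, one_mul]
  have hσ_eq : σ * ρ * ρ = σ := by rw [mul_assoc, ← sq, hρ, mul_one]
  exact hσ_eq ▸ mul_mem (Subgroup.subset_closure hσρ_mem) (Subgroup.subset_closure hρ_mem)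

end Equiv.Perm

theorem perm_generated_by_involutions_infinite_support_and_fixed_general
    {α : Type*} [Infinite α] :
    Subgroup.closure {σ : Equiv.Perm α |
      σ ^ 2 = 1 ∧ σ ≠ 1 ∧ {x | σ x ≠ x}.Infinite ∧ {x | σ x = x}.Infinite} = ⊤ := by
  have h_inv : ∀ τ : Perm α, τ ^ 2 = 1 →
      τ ∈ Subgroup.closure {σ | σ.IsInfiniteCoinfiniteInvolution} := by
    intro τ hτ
    obtain ⟨σ₁, σ₂, h₁, h₂, hfix₁, hfix₂, rfl⟩ := Perm.exists_sq_eq_one_mul_eq_of_infinite hτ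
    exact mul_mem (Perm.mem_closure_of_sq_eq_one_of_infinite_fixedPoints h₁ hfix₁)
      (Perm.mem_closure_of_sq_eq_one_of_infinite_fixedPoints h₂ hfix₂)
  refine (Subgroup.eq_top_iff' _).2 fun π => ?_
  obtain ⟨ρ, σ, hρ, hσ, rfl⟩ := Perm.exists_sq_eq_one_mul_eq π
  exact mul_mem (h_inv ρ hρ) (h_inv σ hσ)

/-- The symmetric group on a countably infinite set is generated by the
involutions with infinite support and infinite fixed-point set. -/
theorem perm_generated_by_involutions_infinite_support_and_fixed
    {α : Type*} [Countable α] [Infinite α] :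
    Subgroup.closure {σ : Equiv.Perm α |
      σ ^ 2 = 1 ∧ σ ≠ 1 ∧ {x | σ x ≠ x}.Infinite ∧ {x | σ x = x}.Infinite} = ⊤ :=
  perm_generated_by_involutions_infinite_support_and_fixed_general
end

section
/- Let G be a topological group whose underlying topological space is separable, let I be a set of cardinality 𝔠 = 2^{ℵ₀}, and suppose there is a surjective group homomorphism from G onto ⨁_{i ∈ I} ℚ. Then there exists a group homomorphism from G to the additive group ℚ that is not continuous when ℚ carries the discrete topology; in particular, G does not have the automatic continuity property. -/
/-!
Each `v : I → ℚ` gives the additive map `a ↦ ∑ᵢ (p a)ᵢ vᵢ` on `G`, and distinct `v` give distinct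
maps because `p` is onto. If all these maps were locally constant, `G` would carry
`#(I → ℚ) = ℵ₀ ^ 𝔠 > 𝔠` locally constant maps to `ℚ`. But a locally constant map is determined
by its values on a countable dense set, so there are at most `ℵ₀ ^ ℵ₀ = 𝔠` of them.
-/

universe u v

open Cardinal

theorem IsLocallyConstant.ext_on {X α : Type*} [TopologicalSpace X] {f g : X → α}
    (hf : IsLocallyConstant f) (hg : IsLocallyConstant g) {s : Set X} (hs : Dense s)
    (h : Set.EqOn f g s) : f = g :=
  letI : TopologicalSpace α := ⊥
  haveI : DiscreteTopology α := ⟨rfl⟩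
  hf.continuous.ext_on hs hg.continuous h

theorem LocallyConstant.restrict_injective_of_dense {X α : Type*} [TopologicalSpace X]
    {s : Set X} (hs : Dense s) :
    Function.Injective fun (f : LocallyConstant X α) (x : s) => f x := fun f g hfg =>
  LocallyConstant.coe_injective <|
    f.isLocallyConstant.ext_on g.isLocallyConstant hs fun x hx => congrFun hfg ⟨x, hx⟩

theorem Cardinal.mk_arrow_le_continuum (α β : Type*) [Countable α] [Countable β] :
    #(α → β) ≤ 𝔠 := by
  rw [mk_arrow, ← aleph0_power_aleph0]
  calc lift #β ^ lift #α ≤ ℵ₀ ^ lift #α := power_le_power_right (by simp [mk_le_aleph0])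
    _ ≤ ℵ₀ ^ ℵ₀ := power_le_power_left aleph0_ne_zero (by simp [mk_le_aleph0])

theorem LocallyConstant.mk_le_continuum (X α : Type*) [TopologicalSpace X]
    [TopologicalSpace.SeparableSpace X] [Countable α] : #(LocallyConstant X α) ≤ 𝔠 := by
  obtain ⟨s, hs_countable, hs_dense⟩ := TopologicalSpace.exists_countable_dense X
  have : Countable s := hs_countable.to_subtype
  calc #(LocallyConstant X α) ≤ #(s → α) :=
        mk_le_of_injective (restrict_injective_of_dense hs_dense)
    _ ≤ 𝔠 := mk_arrow_le_continuum s α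

theorem Cardinal.lift_mk_lt_mk_arrow (I : Type u) (α : Type v) [Nontrivial α] :
    lift.{v} #I < #(I → α) := by
  rw [mk_arrow]
  exact cantor' _ (by simpa [one_lt_iff_nontrivial])

theorem Finsupp.linearCombination_comp_injective {G R I : Type*} [Semiring R]
    {p : G → (I →₀ R)} (hp : Function.Surjective p) :
    Function.Injective fun (v : I → R) (a : G) => linearCombination R v (p a) := by
  intro v w hvw
  funext i
  obtain ⟨a, ha⟩ := hp (single i 1)
  simpa [ha] using congrFun hvw a

theorem exists_discontinuous_hom_to_discrete_rat_general
    {G : Type*} [Group G] [TopologicalSpace G]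
    [TopologicalSpace.SeparableSpace G] {I : Type*}
    (hI : Cardinal.mk I = Cardinal.continuum)
    (p : G → (I →₀ ℚ)) (hp : ∀ a b, p (a * b) = p a + p b)
    (hsurj : Function.Surjective p) :
    ∃ f : G → ℚ, (∀ a b, f (a * b) = f a + f b) ∧ ¬ IsLocallyConstant f := by
  by_contra! hcon
  let Φ (v : I → ℚ) : LocallyConstant G ℚ :=
    ⟨fun a => Finsupp.linearCombination ℚ v (p a), hcon _ fun a b => by simp [hp]⟩
  have hΦ : Function.Injective Φ := fun v w h =>
    Finsupp.linearCombination_comp_injective hsurj (congrArg DFunLike.coe h)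
  have hlt : (𝔠 : Cardinal) < 𝔠 :=
    calc 𝔠 = lift (lift #I) := by rw [hI, lift_continuum, lift_continuum]
      _ < lift #(I → ℚ) := lift_strictMono (lift_mk_lt_mk_arrow I ℚ)
      _ ≤ lift #(LocallyConstant G ℚ) := lift_mk_le_lift_mk_of_injective hΦ
      _ ≤ 𝔠 := lift_le_continuum.mpr (LocallyConstant.mk_le_continuum G ℚ)
  exact hlt.false

/-- A separable topological group surjecting onto `⨁_{i ∈ I} ℚ` with `#I = 𝔠`
admits a homomorphism to the discrete group `ℚ` which is not continuous
(equivalently, not locally constant); in particular it fails automatic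
continuity. -/
theorem exists_discontinuous_hom_to_discrete_rat
    {G : Type*} [Group G] [TopologicalSpace G] [IsTopologicalGroup G]
    [TopologicalSpace.SeparableSpace G] {I : Type*}
    (hI : Cardinal.mk I = Cardinal.continuum)
    (p : G → (I →₀ ℚ)) (hp : ∀ a b, p (a * b) = p a + p b)
    (hsurj : Function.Surjective p) :
    ∃ f : G → ℚ, (∀ a b, f (a * b) = f a + f b) ∧ ¬ IsLocallyConstant f :=
  exists_discontinuous_hom_to_discrete_rat_general hI p hp hsurj
end
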